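/- Type soundness (consistency): if ∅ ⊢ S is derivable in the pacing type system, then S is consistent: for every input map ρ_in there exists an output map ρ_out with (ρ_in, ρ_out) ∈ ⟦S⟧. -/

import Mathlib

/-- Streams of optional integer values. -/
def RStream : Type := ℕ → Option ℤ

/-- `w₁` is less defined than `w₂`. -/
def LessDef (w₁ w₂ : RStream) : Prop := ∀ n, w₁ n = none ∨ w₁ n = w₂ n

/-- Last defined value of `w` at or before `n`. -/
def Last (w : RStream) : ℕ → Option ℤ
  | 0 => w 0
  | n+1 => match w (n+1) with
    | some v => some v
    | none => Last w n

/-- Semantics of hold accesses. -/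
def Hold (w : RStream) (n : ℕ) (v : Option ℤ) : Option ℤ :=
  match Last w n with
  | some u => some u
  | none => v

/-- Semantics of prev accesses. -/
def Prev (w : RStream) (n : ℕ) (v : Option ℤ) : Option ℤ :=
  match w n, n with
  | none, _ => none
  | some _, 0 => v
  | some _, m+1 =>
    match Last w m with
    | some u => some u
    | none => v

/-- Pacing annotations: positive boolean formulas over input variables. -/
inductive Pacing (Vi : Type) where
  | pvar (x : Vi)
  | top
  | pand (τ₁ τ₂ : Pacing Vi)
  | por (τ₁ τ₂ : Pacing Vi)

/-- Denotation of pacing annotations as sets of time points. -/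
def PacingDen {Vi : Type} (ρi : Vi → RStream) : Pacing Vi → Set ℕ
  | .pvar x => {n | ρi x n ≠ none}
  | .top => Set.univ
  | .pand τ₁ τ₂ => PacingDen ρi τ₁ ∩ PacingDen ρi τ₂
  | .por τ₁ τ₂ => PacingDen ρi τ₁ ∪ PacingDen ρi τ₂

/-- Semantic refinement of pacing annotations. -/
def Refines {Vi : Type} (τ τ' : Pacing Vi) : Prop :=
  ∀ ρi : Vi → RStream, PacingDen ρi τ ⊆ PacingDen ρi τ'

/-- The set of τ-well-paced streams. -/
def WellPaced {Vi : Type} (τ : Pacing Vi) (ρi : Vi → RStream) : Set RStream :=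
  {w | ∀ n, n ∈ PacingDen ρi τ ↔ w n ≠ none}

/-- Stream expressions over input variables `Vi` and output variables `Vo`. -/
inductive Expr (Vi Vo : Type) where
  | const (v : ℤ)
  | varIn (x : Vi)
  | varOut (x : Vo)
  | prevIn (x : Vi) (e : Expr Vi Vo)
  | prevOut (x : Vo) (e : Expr Vi Vo)
  | holdIn (x : Vi) (e : Expr Vi Vo)
  | holdOut (x : Vo) (e : Expr Vi Vo)
  | add (e₁ e₂ : Expr Vi Vo)

/-- Addition propagating undefinedness. -/
def addOpt : Option ℤ → Option ℤ → Option ℤ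
  | some a, some b => some (a + b)
  | _, _ => none

/-- Total denotational semantics of stream expressions. -/
def ExprDen {Vi Vo : Type} (ρi : Vi → RStream) (ρo : Vo → RStream) : Expr Vi Vo → RStream
  | .const v => fun _ => some v
  | .varIn x => ρi x
  | .varOut x => ρo x
  | .prevIn x e => fun n => Prev (ρi x) n (ExprDen ρi ρo e n)
  | .prevOut x e => fun n => Prev (ρo x) n (ExprDen ρi ρo e n)
  | .holdIn x e => fun n => Hold (ρi x) n (ExprDen ρi ρo e n)
  | .holdOut x e => fun n => Hold (ρo x) n (ExprDen ρi ρo e n)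
  | .add e₁ e₂ => fun n => addOpt (ExprDen ρi ρo e₁ n) (ExprDen ρi ρo e₂ n)

/-- A partial output stream, viewed as a stream (undefined entries are the always-none stream). -/
def getStream (o : Option RStream) : RStream := o.getD (fun _ => none)

/-- Partial semantics of stream expressions w.r.t. a partial output map. -/
def PExprDen {Vi Vo : Type} (ρi : Vi → RStream) (ρo : Vo → Option RStream) : Expr Vi Vo → RStream
  | .const v => fun _ => some v
  | .varIn x => ρi x
  | .varOut x => getStream (ρo x)
  | .prevIn x e => fun n => Prev (ρi x) n (PExprDen ρi ρo e n)
  | .prevOut x e => fun n => Prev (getStream (ρo x)) n (PExprDen ρi ρo e n)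
  | .holdIn x e => fun n => Hold (ρi x) n (PExprDen ρi ρo e n)
  | .holdOut x e => fun n => Hold (getStream (ρo x)) n (PExprDen ρi ρo e n)
  | .add e₁ e₂ => fun n => addOpt (PExprDen ρi ρo e₁ n) (PExprDen ρi ρo e₂ n)

/-- Totalization of a partial output map by a total one. -/
def totalize {Vo : Type} (ρ₁ : Vo → Option RStream) (ρ₂ : Vo → RStream) : Vo → RStream :=
  fun x => (ρ₁ x).getD (ρ₂ x)

/-- An annotated stream equation `x @ τ := e`. -/
structure Equ (Vi Vo : Type) where
  out : Vo
  pac : Pacing Vi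
  expr : Expr Vi Vo

/-- Satisfaction of a single equation. -/
def SatEq {Vi Vo : Type} (eq : Equ Vi Vo) (ρi : Vi → RStream) (ρo : Vo → RStream) : Prop :=
  ρo eq.out ∈ WellPaced eq.pac ρi ∧ LessDef (ρo eq.out) (ExprDen ρi ρo eq.expr)

/-- Satisfaction of a specification (a list of equations). -/
def SatSpec {Vi Vo : Type} (S : List (Equ Vi Vo)) (ρi : Vi → RStream) (ρo : Vo → RStream) : Prop :=
  ∀ eq ∈ S, SatEq eq ρi ρo

/-- Consistency: every input map admits a satisfying output map. -/
def Consistent {Vi Vo : Type} (S : List (Equ Vi Vo)) : Prop :=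
  ∀ ρi : Vi → RStream, ∃ ρo : Vo → RStream, SatSpec S ρi ρo

/-- Typing contexts. -/
def Ctx (Vi Vo : Type) : Type := Vo → Option (Pacing Vi)

/-- Interpretation of typing contexts as sets of partial output maps. -/
def InCtx {Vi Vo : Type} (Γ : Ctx Vi Vo) (ρi : Vi → RStream) (ρo : Vo → Option RStream) : Prop :=
  ∀ x, (Γ x = none ∧ ρo x = none) ∨
    ∃ τ w, Γ x = some τ ∧ ρo x = some w ∧ w ∈ WellPaced τ ρi

/-- Typing rules for expressions. -/
inductive HasTy {Vi Vo : Type} (Γ : Ctx Vi Vo) : Expr Vi Vo → Pacing Vi → Prop where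
  | const {v : ℤ} {τ} : HasTy Γ (.const v) τ
  | binop {e₁ e₂ τ} : HasTy Γ e₁ τ → HasTy Γ e₂ τ → HasTy Γ (.add e₁ e₂) τ
  | directOut {x τcan τ} : Γ x = some τcan → Refines τ τcan → HasTy Γ (.varOut x) τ
  | directIn {x τ} : Refines τ (.pvar x) → HasTy Γ (.varIn x) τ
  | prevOut {x τcan e τ} : Γ x = some τcan → HasTy Γ e τ → Refines τ τcan →
      HasTy Γ (.prevOut x e) τ
  | prevIn {x e τ} : HasTy Γ e τ → Refines τ (.pvar x) → HasTy Γ (.prevIn x e) τ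
  | holdOut {x e τ} : (Γ x).isSome → HasTy Γ e τ → HasTy Γ (.holdOut x e) τ
  | holdIn {x e τ} : HasTy Γ e τ → HasTy Γ (.holdIn x e) τ

/-- Typing rules for specifications. -/
inductive SpecTy {Vi Vo : Type} [DecidableEq Vo] : Ctx Vi Vo → List (Equ Vi Vo) → Prop where
  | empty {Γ} : SpecTy Γ []
  | equation {Γ x τ e S} : Γ x = none → HasTy Γ e τ →
      SpecTy (Function.update Γ x (some τ)) S → SpecTy Γ (⟨x, τ, e⟩ :: S)

/-- Semantic typing of expressions. -/
def SemTyExpr {Vi Vo : Type} (Γ : Ctx Vi Vo) (e : Expr Vi Vo) (τ : Pacing Vi) : Prop :=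
  ∀ (ρi : Vi → RStream) (ρo : Vo → Option RStream), InCtx Γ ρi ρo →
    ∀ n ∈ PacingDen ρi τ, PExprDen ρi ρo e n ≠ none

/-- Semantic typing of specifications. -/
def SemTySpec {Vi Vo : Type} (Γ : Ctx Vi Vo) (S : List (Equ Vi Vo)) : Prop :=
  ∀ (ρi : Vi → RStream) (ρ₁ : Vo → Option RStream), InCtx Γ ρi ρ₁ →
    ∃ ρ₂ : Vo → RStream, SatSpec S ρi (totalize ρ₁ ρ₂)

section Aux
variable {Vi Vo : Type}


/-!
Typing derivations are read as semantic judgements. A typed expression `e : τ` is defined at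
every time point of `τ` as soon as the outputs in context are well-paced, because a direct or
`prev` access is only allowed at pacings refining that of the accessed stream, and a `hold`
access falls back on its default. A typed specification is then solved equation by equation,
in the order of the derivation: the new output is `e` evaluated on the outputs already built,
restricted to the time points of its pacing, and it is well-paced by the first fact.
-/

section

variable {Vi Vo : Type}

lemma addOpt_ne_none {a b : Option ℤ} (ha : a ≠ none) (hb : b ≠ none) : addOpt a b ≠ none := by
  obtain ⟨a, rfl⟩ := Option.ne_none_iff_exists'.mp ha
  obtain ⟨b, rfl⟩ := Option.ne_none_iff_exists'.mp hb
  simp [addOpt]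

lemma hold_ne_none (w : RStream) (n : ℕ) {v : Option ℤ} (hv : v ≠ none) : Hold w n v ≠ none := by
  unfold Hold
  split <;> simp_all

lemma prev_ne_none {w : RStream} {n : ℕ} {v : Option ℤ} (hw : w n ≠ none) (hv : v ≠ none) :
    Prev w n v ≠ none := by
  unfold Prev
  split
  · simp_all
  · exact hv
  · split <;> simp_all

lemma getStream_some (w : RStream) : getStream (some w) = w := rfl

lemma InCtx.eq_none {Γ : Ctx Vi Vo} {ρi : Vi → RStream} {ρo : Vo → Option RStream}
    (hc : InCtx Γ ρi ρo) {x : Vo} (hx : Γ x = none) : ρo x = none := by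
  rcases hc x with ⟨-, h⟩ | ⟨τ, w, hτ, -, -⟩
  · exact h
  · simp [hx] at hτ

lemma InCtx.getStream_mem_wellPaced {Γ : Ctx Vi Vo} {ρi : Vi → RStream}
    {ρo : Vo → Option RStream} (hc : InCtx Γ ρi ρo) {x : Vo} {τ : Pacing Vi}
    (hx : Γ x = some τ) : getStream (ρo x) ∈ WellPaced τ ρi := by
  rcases hc x with ⟨h, -⟩ | ⟨τ', w, hτ', hw, hwp⟩
  · simp [hx] at h
  · obtain rfl : τ = τ' := Option.some_injective _ (hx.symm.trans hτ')
    rwa [hw, getStream_some]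

lemma InCtx.totalize_apply {Γ : Ctx Vi Vo} {ρi : Vi → RStream} {ρ₁ : Vo → Option RStream}
    (hc : InCtx Γ ρi ρ₁) (ρ₂ : Vo → RStream) {x : Vo} (hx : (Γ x).isSome) :
    totalize ρ₁ ρ₂ x = getStream (ρ₁ x) := by
  rcases hc x with ⟨h, -⟩ | ⟨τ, w, -, hw, -⟩
  · simp [h] at hx
  · simp only [totalize, hw, Option.getD_some, getStream_some]

lemma InCtx.update [DecidableEq Vo] {Γ : Ctx Vi Vo} {ρi : Vi → RStream}
    {ρo : Vo → Option RStream} (hc : InCtx Γ ρi ρo) (x : Vo) {τ : Pacing Vi} {w : RStream}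
    (hw : w ∈ WellPaced τ ρi) :
    InCtx (Function.update Γ x (some τ)) ρi (Function.update ρo x (some w)) := by
  intro y
  by_cases hy : y = x
  · subst hy
    exact Or.inr ⟨τ, w, Function.update_self _ _ _, Function.update_self _ _ _, hw⟩
  · rcases hc y with ⟨hΓ, hρ⟩ | ⟨τ', w', hΓ, hρ, hw'⟩
    · exact Or.inl ⟨(Function.update_of_ne hy _ _).trans hΓ, (Function.update_of_ne hy _ _).trans hρ⟩
    · exact Or.inr ⟨τ', w', (Function.update_of_ne hy _ _).trans hΓ,
        (Function.update_of_ne hy _ _).trans hρ, hw'⟩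

theorem HasTy.semTyExpr {Γ : Ctx Vi Vo} {e : Expr Vi Vo} {τ : Pacing Vi} (h : HasTy Γ e τ) :
    SemTyExpr Γ e τ := by
  intro ρi ρo hc n hn
  induction h with
  | const => simp [PExprDen]
  | binop _ _ ih₁ ih₂ => exact addOpt_ne_none (ih₁ hn) (ih₂ hn)
  | directOut hx href => exact ((hc.getStream_mem_wellPaced hx) n).mp (href ρi hn)
  | directIn href => exact href ρi hn
  | prevOut hx _ href ih =>
    exact prev_ne_none (((hc.getStream_mem_wellPaced hx) n).mp (href ρi hn)) (ih hn)
  | prevIn _ href ih => exact prev_ne_none (href ρi hn) (ih hn)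
  | holdOut _ _ ih => exact hold_ne_none _ n (ih hn)
  | holdIn _ ih => exact hold_ne_none _ n (ih hn)

theorem HasTy.exprDen_eq_pExprDen {Γ : Ctx Vi Vo} {e : Expr Vi Vo} {τ : Pacing Vi}
    (h : HasTy Γ e τ) (ρi : Vi → RStream) {ρo : Vo → RStream} {ρ₁ : Vo → Option RStream}
    (hag : ∀ x, (Γ x).isSome → ρo x = getStream (ρ₁ x)) :
    ExprDen ρi ρo e = PExprDen ρi ρ₁ e := by
  induction h with
  | const | directIn _ => rfl
  | binop _ _ ih₁ ih₂ => rw [ExprDen, PExprDen, ih₁, ih₂]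
  | @directOut x _ _ hx _ => rw [ExprDen, PExprDen, hag x (by simp [hx])]
  | @prevOut x _ _ _ hx _ _ ih => rw [ExprDen, PExprDen, hag x (by simp [hx]), ih]
  | prevIn _ _ ih | holdIn _ ih => rw [ExprDen, PExprDen, ih]
  | @holdOut x _ _ hx _ ih => rw [ExprDen, PExprDen, hag x hx, ih]

open Classical in
noncomputable def restrictStream (s : Set ℕ) (w : RStream) : RStream :=
  fun n => if n ∈ s then w n else none

lemma lessDef_restrictStream (s : Set ℕ) (w : RStream) : LessDef (restrictStream s w) w := by
  intro n
  by_cases hn : n ∈ s <;> simp [restrictStream, hn]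

lemma restrictStream_mem_wellPaced {τ : Pacing Vi} {ρi : Vi → RStream}
    {w : RStream} (hw : ∀ n ∈ PacingDen ρi τ, w n ≠ none) :
    restrictStream (PacingDen ρi τ) w ∈ WellPaced τ ρi := by
  intro n
  by_cases hn : n ∈ PacingDen ρi τ <;> simp [restrictStream, hn, hw]

lemma totalize_update_of_eq_none [DecidableEq Vo] {ρ₁ : Vo → Option RStream}
    (ρ₂ : Vo → RStream) {x : Vo} (hx : ρ₁ x = none) (w : RStream) :
    totalize ρ₁ (Function.update ρ₂ x w) = totalize (Function.update ρ₁ x (some w)) ρ₂ := by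
  funext y
  by_cases hy : y = x
  · subst hy; simp [totalize, hx]
  · simp [totalize, Function.update_of_ne hy]

theorem SpecTy.semTySpec [DecidableEq Vo] {Γ : Ctx Vi Vo}
    {S : List (Equ Vi Vo)} (h : SpecTy Γ S) : SemTySpec Γ S := by
  induction h with
  | empty => exact fun _ _ _ => ⟨fun _ _ => none, by simp [SatSpec]⟩
  | @equation Γ x τ e S hx he _ ih =>
    intro ρi ρ₁ hc
    set w := restrictStream (PacingDen ρi τ) (PExprDen ρi ρ₁ e)
    have hwp : w ∈ WellPaced τ ρi := restrictStream_mem_wellPaced (he.semTyExpr ρi ρ₁ hc)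
    obtain ⟨ρ₂, hsat⟩ := ih ρi _ (hc.update x hwp)
    refine ⟨Function.update ρ₂ x w, ?_⟩
    have hx₁ : ρ₁ x = none := hc.eq_none hx
    have htot := totalize_update_of_eq_none ρ₂ hx₁ w
    have hwx : totalize ρ₁ (Function.update ρ₂ x w) x = w := by simp [totalize, hx₁]
    have hden : ExprDen ρi (totalize ρ₁ (Function.update ρ₂ x w)) e = PExprDen ρi ρ₁ e :=
      he.exprDen_eq_pExprDen ρi fun y hy => hc.totalize_apply _ hy
    intro eq hmem
    rcases List.mem_cons.mp hmem with rfl | heq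
    · dsimp only [SatEq]
      rw [hwx, hden]
      exact ⟨hwp, lessDef_restrictStream _ _⟩
    · rw [htot]; exact hsat eq heq

end

theorem type_soundness {Vi Vo : Type} [DecidableEq Vo] (S : List (Equ Vi Vo))
    (h : SpecTy (fun _ => none : Ctx Vi Vo) S) : Consistent S := by
  intro ρi
  have hempty : InCtx (fun _ => none : Ctx Vi Vo) ρi fun _ => none := fun _ => Or.inl ⟨rfl, rfl⟩
  obtain ⟨ρ₂, hsat⟩ := h.semTySpec ρi _ hempty
  exact ⟨_, hsat⟩
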